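/- Let N ≥ 2 and let p_1, …, p_{N−1} be integers with N dividing ∑_{j=1}^{N−1} j·p_j. For an integer k, there exists an N×N antisymmetric integer matrix M with nonnegative upper entries such that p_j = k·δ_{j,1} + k·δ_{j,N−1} − Δp_j for all 1 ≤ j ≤ N−1 if and only if k ≥ k_n for every 1 ≤ n ≤ N−1. Consequently, the minimal such integer k equals k_min := max{k_n : 1 ≤ n ≤ N−1}. -/

import Mathlib

/-!
Write `m j` for the row sums of `M` and `T n = m 1 + ⋯ + m n` for their partial sums. If `M` is
antisymmetric with nonnegative upper entries then `T 0 = T N = 0` and `T n ≥ 0`, since the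
leading `n × n` block of `M` sums to zero and the block to its right is nonnegative; conversely
every such `T` is realized by the matrix carrying `T j` at position `(j, j + 1)`. The condition
on `p` prescribes the second differences of `T`, which together with the boundary values
determine `T n = k - k_{N-n}` for `0 < n < N`. Divisibility by `N` is exactly what makes
`k_N = 0`, so that this candidate has the right boundary values.
-/

open Finset

theorem sum_Icc_sub_pred {G : Type*} [AddCommGroup G] (f : ℕ → G) (n : ℕ) :
    ∑ j ∈ Icc 1 n, (f j - f (j - 1)) = f n - f 0 := by
  induction n with
  | zero => simp
  | succ n ih => rw [sum_Icc_succ_top (by omega), ih, Nat.add_sub_cancel]; abel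

theorem sum_Icc_sub_mul_add_one {R : Type*} [CommRing R] (a : ℕ → R) (n : ℕ) :
    ∑ j ∈ Icc 1 (n + 1), (((n + 1 : ℕ) : R) - j) * a j =
      ∑ j ∈ Icc 1 n, ((n : R) - j) * a j + ∑ j ∈ Icc 1 n, a j := by
  rw [sum_Icc_succ_top (by omega), sub_self, zero_mul, add_zero, ← sum_add_distrib]
  exact sum_congr rfl fun j _ => by push_cast; ring

section SecondDifference

variable {G : Type*} [AddCommGroup G]

theorem eq_nsmul_add_of_secondDiff_eq_zero {h : ℕ → G} {N : ℕ}
    (hd : ∀ j, j + 2 ≤ N → h (j + 2) - 2 • h (j + 1) + h j = 0) :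
    ∀ n ≤ N, h n = n • (h 1 - h 0) + h 0 := by
  intro n hn
  induction n using Nat.strongRecOn with
  | ind n ih =>
    match n, hn with
    | 0, _ => simp
    | 1, _ => simp
    | n + 2, hn =>
      have h2 := hd n hn
      rw [ih n (by omega) (by omega), ih (n + 1) (by omega) (by omega)] at h2
      linear_combination (norm := module) h2

theorem eqOn_Iic_of_secondDiff_eq [IsAddTorsionFree G] {f g : ℕ → G} {N : ℕ}
    (h0 : f 0 = g 0) (hN : f N = g N)
    (hd : ∀ j, j + 2 ≤ N →
      f (j + 2) - 2 • f (j + 1) + f j = g (j + 2) - 2 • g (j + 1) + g j) :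
    Set.EqOn f g (Set.Iic N) := by
  have affine := eq_nsmul_add_of_secondDiff_eq_zero (h := f - g) (N := N) fun j hj => by
    simp only [Pi.sub_apply, smul_sub]
    rw [← sub_eq_zero.mpr (hd j hj)]; abel
  simp only [Pi.sub_apply, h0, sub_self, add_zero] at affine
  intro n hn
  rcases Nat.eq_zero_or_pos N with rfl | hNpos
  · simpa [Nat.le_zero.mp hn] using h0
  have h1 : f 1 - g 1 = 0 :=
    nsmul_right_injective hNpos.ne' (by simpa [hN] using (affine N le_rfl).symm)
  simpa [h1, sub_eq_zero] using affine n hn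

end SecondDifference

section AntisymmetricMatrix

variable {ι R : Type*} [AddCommGroup R] {N : ℕ}

theorem sum_sum_eq_zero_of_antisymm [IsAddTorsionFree R] {s : Finset ι} {M : ι → ι → R}
    (hM : ∀ j ∈ s, ∀ l ∈ s, M j l = -M l j) : ∑ j ∈ s, ∑ l ∈ s, M j l = 0 := by
  rw [← self_eq_neg]
  calc ∑ j ∈ s, ∑ l ∈ s, M j l = ∑ j ∈ s, ∑ l ∈ s, -M l j :=
        sum_congr rfl fun j hj => sum_congr rfl fun l hl => hM j hj l hl
    _ = -∑ j ∈ s, ∑ l ∈ s, M j l := by rw [sum_comm]; simp only [sum_neg_distrib]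

def pathFlow (T : ℕ → R) (j l : ℕ) : R :=
  (if l = j + 1 then T j else 0) - (if j = l + 1 then T l else 0)

theorem pathFlow_antisymm (T : ℕ → R) (j l : ℕ) : pathFlow T j l = -pathFlow T l j :=
  (neg_sub _ _).symm

theorem sum_pathFlow {T : ℕ → R} (h0 : T 0 = 0) (hN : T N = 0) {j : ℕ} (hj : j ∈ Icc 1 N) :
    ∑ l ∈ Icc 1 N, pathFlow T j l = T j - T (j - 1) := by
  rw [mem_Icc] at hj
  have hpred : ∀ l, (if j = l + 1 then T l else 0) = if l = j - 1 then T (j - 1) else 0 := by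
    intro l
    by_cases hl : l = j - 1
    · rw [if_pos (by omega), if_pos hl, hl]
    · rw [if_neg (by omega), if_neg hl]
  simp only [pathFlow, sum_sub_distrib, hpred, sum_ite_eq', mem_Icc]
  congr 1
  · split_ifs with hj'
    · rfl
    · rw [show j = N by omega, hN]
  · split_ifs with hj'
    · rfl
    · rw [show j - 1 = 0 by omega, h0]

variable [LinearOrder R]

theorem pathFlow_nonneg {T : ℕ → R} (hT : ∀ n ≤ N, 0 ≤ T n) {j l : ℕ} (hjl : j < l)
    (hl : l ≤ N) : 0 ≤ pathFlow T j l := by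
  rw [pathFlow, if_neg (show j ≠ l + 1 by omega), sub_zero]
  split_ifs
  exacts [hT j (by omega), le_rfl]

variable [IsOrderedAddMonoid R]

theorem sum_Icc_rowSum_nonneg {M : ℕ → ℕ → R}
    (hanti : ∀ j ∈ Icc 1 N, ∀ l ∈ Icc 1 N, M j l = -M l j)
    (hupper : ∀ j ∈ Icc 1 N, ∀ l ∈ Icc 1 N, j < l → 0 ≤ M j l) {n : ℕ} (hn : n ≤ N) :
    0 ≤ ∑ j ∈ Icc 1 n, ∑ l ∈ Icc 1 N, M j l := by
  have hsub : Icc 1 n ⊆ Icc 1 N := Icc_subset_Icc_right hn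
  have hfilter : (Icc 1 N).filter (· ≤ n) = Icc 1 n := by ext; simp; omega
  simp_rw [← sum_filter_add_sum_filter_not (Icc 1 N) (· ≤ n), hfilter, sum_add_distrib,
    sum_sum_eq_zero_of_antisymm fun j hj l hl => hanti j (hsub hj) l (hsub hl), zero_add]
  refine sum_nonneg fun j hj => sum_nonneg fun l hl => ?_
  simp only [mem_filter, mem_Icc] at hj hl
  exact hupper j (mem_Icc.mpr (by omega)) l (mem_Icc.mpr hl.1) (by omega)

theorem exists_antisymm_rowSum_iff (m : ℕ → R) :
    (∃ M : ℕ → ℕ → R, (∀ j ∈ Icc 1 N, ∀ l ∈ Icc 1 N, M j l = -M l j) ∧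
      (∀ j ∈ Icc 1 N, ∀ l ∈ Icc 1 N, j < l → 0 ≤ M j l) ∧
      ∀ j ∈ Icc 1 N, ∑ l ∈ Icc 1 N, M j l = m j) ↔
    ∑ j ∈ Icc 1 N, m j = 0 ∧ ∀ n ≤ N, 0 ≤ ∑ j ∈ Icc 1 n, m j := by
  constructor
  · rintro ⟨M, hanti, hupper, hrow⟩
    have hpartial : ∀ n ≤ N, ∑ j ∈ Icc 1 n, m j = ∑ j ∈ Icc 1 n, ∑ l ∈ Icc 1 N, M j l :=
      fun n hn => sum_congr rfl fun j hj => (hrow j (Icc_subset_Icc_right hn hj)).symm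
    refine ⟨?_, fun n hn => hpartial n hn ▸ sum_Icc_rowSum_nonneg hanti hupper hn⟩
    rw [hpartial N le_rfl, sum_sum_eq_zero_of_antisymm hanti]
  · rintro ⟨hsum, hnonneg⟩
    set T : ℕ → R := fun n => ∑ j ∈ Icc 1 n, m j
    refine ⟨pathFlow T, fun j _ l _ => pathFlow_antisymm T j l,
      fun j _ l hl hjl => pathFlow_nonneg hnonneg hjl (mem_Icc.mp hl).2, fun j hj => ?_⟩
    rw [sum_pathFlow (by simp [T]) hsum hj]
    obtain ⟨i, rfl⟩ : ∃ i, j = i + 1 := ⟨j - 1, by simp at hj; omega⟩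
    simp [T, sum_Icc_succ_top]

end AntisymmetricMatrix

section Thresholds

variable (N : ℕ) (p : ℕ → ℤ) (k : ℤ)

def kBound (n : ℕ) : ℤ :=
  n * ((∑ j ∈ Icc 1 (N - 1), (j : ℤ) * p j) / N) - ∑ j ∈ Icc 1 n, ((n : ℤ) - j) * p (N - j)

/-- The only possible value of the `n`-th partial row sum of a realizing matrix. -/
def slack (n : ℕ) : ℤ :=
  k - kBound N p (N - n) - (if n = 0 then k else 0) - (if n = N then k else 0)

variable {N p k}

theorem kBound_zero : kBound N p 0 = 0 := by simp [kBound]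

theorem kBound_self (hdvd : (N : ℤ) ∣ ∑ j ∈ Icc 1 (N - 1), (j : ℤ) * p j) :
    kBound N p N = 0 := by
  rcases Nat.eq_zero_or_pos N with rfl | hN
  · simp [kBound]
  have hreflect : ∑ j ∈ Icc 1 N, ((N : ℤ) - j) * p (N - j) =
      ∑ j ∈ Icc 1 (N - 1), (j : ℤ) * p j := by
    obtain ⟨M, rfl⟩ : ∃ M, N = M + 1 := ⟨N - 1, by omega⟩
    rw [sum_Icc_succ_top (by omega), sub_self, zero_mul, add_zero, Nat.add_sub_cancel]
    refine sum_nbij' (fun j => M + 1 - j) (fun j => M + 1 - j) ?_ ?_ ?_ ?_ ?_ <;>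
      intro j hj <;> simp only [mem_Icc] at hj ⊢ <;> first | omega | rw [Nat.cast_sub (by omega)]
  rw [kBound, hreflect, Int.mul_ediv_cancel' hdvd, sub_self]

theorem kBound_secondDiff (n : ℕ) :
    kBound N p (n + 2) - 2 * kBound N p (n + 1) + kBound N p n = -p (N - (n + 1)) := by
  rw [kBound, kBound, kBound, show n + 2 = n + 1 + 1 from rfl, sum_Icc_sub_mul_add_one,
    sum_Icc_sub_mul_add_one, sum_Icc_succ_top (show 1 ≤ n + 1 by omega)]
  push_cast
  ring

theorem slack_zero (hN : 1 ≤ N) (hdvd : (N : ℤ) ∣ ∑ j ∈ Icc 1 (N - 1), (j : ℤ) * p j) :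
    slack N p k 0 = 0 := by
  simp [slack, kBound_self hdvd, show 0 ≠ N by omega]

theorem slack_self (hN : 1 ≤ N) : slack N p k N = 0 := by
  simp [slack, kBound_zero, show N ≠ 0 by omega]

theorem slack_of_mem {n : ℕ} (hn : n ∈ Icc 1 (N - 1)) :
    slack N p k n = k - kBound N p (N - n) := by
  rw [mem_Icc] at hn
  simp [slack, show n ≠ 0 by omega, show n ≠ N by omega]

theorem slack_secondDiff {j : ℕ} (hj : j + 2 ≤ N) :
    slack N p k (j + 2) - 2 * slack N p k (j + 1) + slack N p k j =
      p (j + 1) - (if j + 1 = 1 then k else 0) - (if j + 1 = N - 1 then k else 0) := by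
  obtain ⟨i, rfl⟩ : ∃ i, N = i + j + 2 := ⟨N - (j + 2), by omega⟩
  have h := kBound_secondDiff (N := i + j + 2) (p := p) i
  simp only [slack, show i + j + 2 - j = i + 2 by omega, show i + j + 2 - (j + 1) = i + 1 by omega,
    show i + j + 2 - (j + 2) = i by omega, show i + j + 2 - (i + 1) = j + 1 by omega] at h ⊢
  split_ifs <;> first | contradiction | omega

theorem slack_nonneg (hN : 1 ≤ N) (hdvd : (N : ℤ) ∣ ∑ j ∈ Icc 1 (N - 1), (j : ℤ) * p j)
    (hk : ∀ n ∈ Icc 1 (N - 1), kBound N p n ≤ k) {n : ℕ} (hn : n ≤ N) : 0 ≤ slack N p k n := by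
  rcases Nat.eq_zero_or_pos n with rfl | hn0
  · rw [slack_zero hN hdvd]
  rcases hn.eq_or_lt with rfl | hnN
  · rw [slack_self hN]
  rw [slack_of_mem (mem_Icc.mpr ⟨hn0, by omega⟩)]
  linarith [hk (N - n) (mem_Icc.mpr ⟨by omega, by omega⟩)]

end Thresholds

section Realizability

variable {N : ℕ} {p : ℕ → ℤ} {k : ℤ}

variable (N p k) in
def IsRealizable : Prop :=
  ∃ M : ℕ → ℕ → ℤ,
    (∀ j ∈ Icc 1 N, ∀ l ∈ Icc 1 N, M j l = -M l j) ∧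
    (∀ j ∈ Icc 1 N, ∀ l ∈ Icc 1 N, j < l → 0 ≤ M j l) ∧
    (∀ j ∈ Icc 1 (N - 1),
      p j = (if j = 1 then k else 0) + (if j = N - 1 then k else 0)
        - ((∑ l ∈ Icc 1 N, M j l) - (∑ l ∈ Icc 1 N, M (j + 1) l)))

theorem isRealizable_iff_exists_rowSums :
    IsRealizable N p k ↔ ∃ m : ℕ → ℤ,
      (∑ j ∈ Icc 1 N, m j = 0 ∧ ∀ n ≤ N, 0 ≤ ∑ j ∈ Icc 1 n, m j) ∧
      ∀ j ∈ Icc 1 (N - 1),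
        p j = (if j = 1 then k else 0) + (if j = N - 1 then k else 0) - (m j - m (j + 1)) := by
  constructor
  · rintro ⟨M, hanti, hupper, hp⟩
    exact ⟨fun j => ∑ l ∈ Icc 1 N, M j l,
      (exists_antisymm_rowSum_iff _).mp ⟨M, hanti, hupper, fun _ _ => rfl⟩, hp⟩
  · rintro ⟨m, hm, hp⟩
    obtain ⟨M, hanti, hupper, hrow⟩ := (exists_antisymm_rowSum_iff m).mpr hm
    refine ⟨M, hanti, hupper, fun j hj => ?_⟩
    rw [mem_Icc] at hj
    rw [hrow j (mem_Icc.mpr ⟨hj.1, by omega⟩), hrow (j + 1) (mem_Icc.mpr ⟨by omega, by omega⟩)]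
    exact hp j (mem_Icc.mpr hj)

theorem sum_Icc_eq_slack (hN : 1 ≤ N) (hdvd : (N : ℤ) ∣ ∑ j ∈ Icc 1 (N - 1), (j : ℤ) * p j)
    {m : ℕ → ℤ} (hsum : ∑ j ∈ Icc 1 N, m j = 0)
    (hp : ∀ j ∈ Icc 1 (N - 1),
      p j = (if j = 1 then k else 0) + (if j = N - 1 then k else 0) - (m j - m (j + 1))) :
    ∀ n ≤ N, ∑ j ∈ Icc 1 n, m j = slack N p k n := by
  refine eqOn_Iic_of_secondDiff_eq (by simp [slack_zero hN hdvd]) (by rw [hsum, slack_self hN])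
    fun j hj => ?_
  have hpj := hp (j + 1) (mem_Icc.mpr ⟨by omega, by omega⟩)
  rw [nsmul_eq_mul, nsmul_eq_mul, Nat.cast_ofNat, slack_secondDiff hj,
    sum_Icc_succ_top (by omega), sum_Icc_succ_top (by omega)]
  linarith

theorem isRealizable_iff (hN : 1 ≤ N) (hdvd : (N : ℤ) ∣ ∑ j ∈ Icc 1 (N - 1), (j : ℤ) * p j) :
    IsRealizable N p k ↔ ∀ n ∈ Icc 1 (N - 1), kBound N p n ≤ k := by
  rw [isRealizable_iff_exists_rowSums]
  constructor
  · rintro ⟨m, ⟨hsum, hnonneg⟩, hp⟩ n hn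
    rw [mem_Icc] at hn
    have h := hnonneg (N - n) (by omega)
    rw [sum_Icc_eq_slack hN hdvd hsum hp (N - n) (by omega),
      slack_of_mem (mem_Icc.mpr ⟨by omega, by omega⟩), Nat.sub_sub_self (by omega)] at h
    linarith
  · intro hk
    refine ⟨fun j => slack N p k j - slack N p k (j - 1), ⟨?_, fun n hn => ?_⟩, fun j hj => ?_⟩
    · rw [sum_Icc_sub_pred, slack_self hN, slack_zero hN hdvd, sub_zero]
    · rw [sum_Icc_sub_pred, slack_zero hN hdvd, sub_zero]
      exact slack_nonneg hN hdvd hk hn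
    · obtain ⟨i, rfl⟩ : ∃ i, j = i + 1 := ⟨j - 1, by simp at hj; omega⟩
      have h := slack_secondDiff (N := N) (p := p) (k := k) (j := i) (by simp at hj; omega)
      simp only [Nat.add_one_sub_one] at h ⊢
      linarith

end Realizability

/-- Let `N ≥ 2` and let `p 1, …, p (N-1)` be integers with `N`
dividing `S := ∑_{j=1}^{N-1} j·p j`. For an integer `k`, there exists an `N × N`
antisymmetric integer matrix `M` with nonnegative upper entries such that
`p j = k·δ_{j,1} + k·δ_{j,N-1} - Δp j` for all `1 ≤ j ≤ N-1` if and only if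
`k ≥ k_n` for every `1 ≤ n ≤ N-1`, where
`k_n = (n/N)·S - ∑_{j=1}^n (n-j)·p (N-j)` (an integer by the divisibility
assumption).  Consequently the minimal such `k` equals
`k_min = max { k_n | 1 ≤ n ≤ N-1 }`. -/
theorem stmt_6 (N : ℕ) (hN : 2 ≤ N) (p : ℕ → ℤ)
    (hdvd : (N : ℤ) ∣ ∑ j ∈ Finset.Icc 1 (N - 1), (j : ℤ) * p j) :
    let S : ℤ := ∑ j ∈ Finset.Icc 1 (N - 1), (j : ℤ) * p j
    let kn : ℕ → ℤ := fun n =>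
      (n : ℤ) * (S / N) - ∑ j ∈ Finset.Icc 1 n, ((n : ℤ) - j) * p (N - j)
    let P : ℤ → Prop := fun k => ∃ M : ℕ → ℕ → ℤ,
      (∀ j ∈ Finset.Icc 1 N, ∀ l ∈ Finset.Icc 1 N, M j l = - M l j) ∧
      (∀ j ∈ Finset.Icc 1 N, ∀ l ∈ Finset.Icc 1 N, j < l → 0 ≤ M j l) ∧
      (∀ j ∈ Finset.Icc 1 (N - 1),
        p j = (if j = 1 then k else 0) + (if j = N - 1 then k else 0)
          - ((∑ l ∈ Finset.Icc 1 N, M j l) - (∑ l ∈ Finset.Icc 1 N, M (j + 1) l)))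
    (∀ k : ℤ, P k ↔ ∀ n ∈ Finset.Icc 1 (N - 1), kn n ≤ k) ∧
      IsLeast {k : ℤ | P k}
        (((Finset.Icc 1 (N - 1)).image kn).max'
          ((Finset.nonempty_Icc.mpr (by omega)).image kn)) := by
  intro S kn P
  have hiff : ∀ k : ℤ, P k ↔ ∀ n ∈ Finset.Icc 1 (N - 1), kn n ≤ k :=
    fun k => isRealizable_iff (by omega) hdvd
  have hP : {k : ℤ | P k} = upperBounds ↑((Finset.Icc 1 (N - 1)).image kn) := by
    ext k
    rw [Set.mem_ofPred_eq, hiff, mem_upperBounds, coe_image, Set.forall_mem_image]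
    rfl
  exact ⟨hiff, hP ▸ (isGreatest_max' _ _).isLUB⟩
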